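/- Let 0 → C^0 → C^1 → ⋯ → C^n → 0 be a cochain complex of finite-dimensional complex inner product spaces with differentials d_j : C^j → C^{j+1} satisfying d_{j+1} ∘ d_j = 0, and let Δ_j = d_{j-1} d_{j-1}* + d_j* d_j be the associated Laplacians. For μ ≥ 0, let E_j(≤ μ) ⊆ C^j be the span of eigenvectors of Δ_j with eigenvalue at most μ, and let H^j = ker d_j / im d_{j-1}. Then for every q, ∑_{0 ≤ j ≤ q} (−1)^{q−j} dim H^j ≤ ∑_{0 ≤ j ≤ q} (−1)^{q−j} dim E_j(≤ μ). -/

import Mathlib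

/-!
The spaces `E j = E_j(≤ μ)` contain the harmonic space `ker Δ j ≅ H^j` and are stable under `d` and
`d†`, because these intertwine the Laplacians. On `E j ⊓ ker d j` the Laplacian reduces to
`d (j-1) ∘ d (j-1)†`, so `E j ⊓ ker d j` is the orthogonal sum of `ker Δ j` and `d (j-1) (E (j-1))`.
With rank–nullity this gives `dim E j = dim H^j + r (j-1) + r j`, where `r j = dim d j (E j)`, and
the alternating sum telescopes to `∑ (-1)^(q-j) dim E j = ∑ (-1)^(q-j) dim H^j + r q`.
-/

open ContinuousLinearMap Module Submodule

section RankNullity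

variable {K U V X : Type*} [DivisionRing K] [AddCommGroup U] [Module K U]
  [AddCommGroup V] [Module K V] [AddCommGroup X] [Module K X]

theorem Submodule.finrank_inf_ker_add_finrank_map [FiniteDimensional K U] (f : U →ₗ[K] V)
    (W : Submodule K U) :
    finrank K ↥(W ⊓ LinearMap.ker f) + finrank K ↥(W.map f) = finrank K W := by
  rw [← LinearMap.range_domRestrict, ← map_comap_subtype,
    (equivMapOfInjective _ W.injective_subtype _).finrank_eq.symm, ← LinearMap.ker_domRestrict,
    add_comm, LinearMap.finrank_range_add_finrank_ker]

theorem finrank_quotient_range_codRestrict_add_finrank_range [FiniteDimensional K V]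
    (a : U →ₗ[K] V) (b : V →ₗ[K] X) (h : ∀ x, a x ∈ LinearMap.ker b) :
    finrank K (LinearMap.ker b ⧸ LinearMap.range (a.codRestrict (LinearMap.ker b) h))
      + finrank K (LinearMap.range a) = finrank K (LinearMap.ker b) := by
  have hle : LinearMap.range a ≤ LinearMap.ker b := by
    rintro _ ⟨x, rfl⟩
    exact h x
  rw [← (comapSubtypeEquivOfLe hle).finrank_eq, ← LinearMap.range_codRestrict _ _ h,
    finrank_quotient_add_finrank]

end RankNullity

section Laplacian

variable {𝕜 V' V V'' V''' : Type*} [RCLike 𝕜]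
  [NormedAddCommGroup V'] [InnerProductSpace 𝕜 V'] [CompleteSpace V']
  [NormedAddCommGroup V] [InnerProductSpace 𝕜 V] [CompleteSpace V]
  [NormedAddCommGroup V''] [InnerProductSpace 𝕜 V''] [CompleteSpace V'']
  [NormedAddCommGroup V'''] [InnerProductSpace 𝕜 V'''] [CompleteSpace V''']

noncomputable def laplacian (a : V' →L[𝕜] V) (b : V →L[𝕜] V'') : V →L[𝕜] V :=
  adjoint b ∘L b + a ∘L adjoint a

variable (a : V' →L[𝕜] V) (b : V →L[𝕜] V'')

theorem laplacian_apply (v : V) : laplacian a b v = adjoint b (b v) + a (adjoint a v) := rfl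

theorem re_inner_laplacian_self (v : V) :
    RCLike.re (inner 𝕜 (laplacian a b v) v) = ‖b v‖ ^ 2 + ‖adjoint a v‖ ^ 2 := by
  rw [laplacian_apply, inner_add_left, adjoint_inner_left, ← adjoint_inner_right a, map_add,
    inner_self_eq_norm_sq, inner_self_eq_norm_sq]

theorem ker_laplacian : (laplacian a b).ker = b.ker ⊓ (adjoint a).ker := by
  refine le_antisymm (fun v hv => ?_) (fun v ⟨hb, ha⟩ => ?_)
  · have h := re_inner_laplacian_self a b v
    rw [show laplacian a b v = 0 from hv, inner_zero_left, map_zero] at h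
    obtain ⟨hb, ha⟩ := (add_eq_zero_iff_of_nonneg (sq_nonneg _) (sq_nonneg _)).mp h.symm
    exact ⟨norm_eq_zero.mp (pow_eq_zero_iff two_ne_zero |>.mp hb),
      norm_eq_zero.mp (pow_eq_zero_iff two_ne_zero |>.mp ha)⟩
  · show laplacian a b v = 0
    rw [laplacian_apply, show b v = 0 from hb, show adjoint a v = 0 from ha, map_zero, map_zero,
      add_zero]

theorem adjoint_laplacian : adjoint (laplacian a b) = laplacian a b := by
  simp [laplacian, adjoint_comp, adjoint_adjoint]

theorem comp_laplacian (c : V'' →L[𝕜] V''') (hab : b ∘L a = 0) (hbc : c ∘L b = 0) :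
    b ∘L laplacian a b = laplacian b c ∘L b := by
  ext v
  have hab' : b (a (adjoint a v)) = 0 := congr($hab (adjoint a v))
  have hbc' : c (b v) = 0 := congr($hbc v)
  simp [laplacian_apply, hab', hbc']

theorem adjoint_comp_laplacian (c : V'' →L[𝕜] V''') (hab : b ∘L a = 0) (hbc : c ∘L b = 0) :
    adjoint b ∘L laplacian b c = laplacian a b ∘L adjoint b := by
  simpa [adjoint_comp, adjoint_laplacian] using congr(adjoint $(comp_laplacian a b c hab hbc)).symm

theorem finrank_inf_ker_eq_finrank_ker_laplacian_add [FiniteDimensional 𝕜 V] (hab : b ∘L a = 0)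
    {W : Submodule 𝕜 V} {W' : Submodule 𝕜 V'} (hker : (laplacian a b).ker ≤ W)
    (ha : W'.map (a : V' →ₗ[𝕜] V) ≤ W) (ha' : W.map (adjoint a : V →ₗ[𝕜] V') ≤ W') :
    finrank 𝕜 ↥(W ⊓ b.ker) =
      finrank 𝕜 (laplacian a b).ker + finrank 𝕜 (W'.map (a : V' →ₗ[𝕜] V)) := by
  set Δ := laplacian a b
  have hkerU : Δ.ker ≤ W ⊓ b.ker := le_inf hker (ker_laplacian a b ▸ inf_le_left)
  have himU : W'.map (a : V' →ₗ[𝕜] V) ≤ W ⊓ b.ker := by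
    refine le_inf ha ?_
    rintro _ ⟨x, -, rfl⟩
    exact congr($hab x)
  have hkerΔ : Δ.ker ≤ (LinearMap.range (a : V' →ₗ[𝕜] V))ᗮ := by
    rw [orthogonal_range]
    exact ker_laplacian a b ▸ inf_le_right
  have hdisj : Δ.ker ⊓ W'.map (a : V' →ₗ[𝕜] V) = ⊥ :=
    eq_bot_iff.mpr <| (inf_le_inf hkerΔ LinearMap.map_le_range).trans
      (orthogonal_disjoint _).symm.le_bot
  -- on `W ⊓ ker b` the Laplacian is `a ∘ a†`, so its image lies in `a (W')`
  have hΔU : (W ⊓ b.ker).map (Δ : V →ₗ[𝕜] V) ≤ W'.map (a : V' →ₗ[𝕜] V) := by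
    rintro _ ⟨v, ⟨hvW, hvb⟩, rfl⟩
    refine ⟨adjoint a v, ha' ⟨v, hvW, rfl⟩, ?_⟩
    simp [Δ, laplacian_apply, show b v = 0 from hvb]
  have hUle := finrank_inf_ker_add_finrank_map (Δ : V →ₗ[𝕜] V) (W ⊓ b.ker)
  rw [inf_eq_right.mpr hkerU] at hUle
  have hsup := finrank_sup_add_finrank_inf_eq Δ.ker (W'.map (a : V' →ₗ[𝕜] V))
  rw [hdisj, finrank_bot] at hsup
  have := finrank_mono hΔU
  have := finrank_mono (sup_le hkerU himU)
  omega

theorem finrank_eq_finrank_ker_laplacian_add_add [FiniteDimensional 𝕜 V] (hab : b ∘L a = 0)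
    {W : Submodule 𝕜 V} {W' : Submodule 𝕜 V'} (hker : (laplacian a b).ker ≤ W)
    (ha : W'.map (a : V' →ₗ[𝕜] V) ≤ W) (ha' : W.map (adjoint a : V →ₗ[𝕜] V') ≤ W') :
    finrank 𝕜 W = finrank 𝕜 (laplacian a b).ker + finrank 𝕜 (W'.map (a : V' →ₗ[𝕜] V)) +
      finrank 𝕜 (W.map (b : V →ₗ[𝕜] V'')) := by
  rw [← finrank_inf_ker_add_finrank_map (b : V →ₗ[𝕜] V'') W,
    finrank_inf_ker_eq_finrank_ker_laplacian_add a b hab hker ha ha']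

theorem finrank_cohomology_eq_finrank_ker_laplacian [FiniteDimensional 𝕜 V]
    (h : ∀ x, (a : V' →ₗ[𝕜] V) x ∈ b.ker) :
    finrank 𝕜 (b.ker ⧸ LinearMap.range ((a : V' →ₗ[𝕜] V).codRestrict b.ker h)) =
      finrank 𝕜 (laplacian a b).ker := by
  have hab : b ∘L a = 0 := by
    ext x
    exact h x
  have := finrank_inf_ker_eq_finrank_ker_laplacian_add a b hab (W := ⊤) (W' := ⊤)
    le_top le_top le_top
  rw [top_inf_eq, Submodule.map_top] at this
  have := finrank_quotient_range_codRestrict_add_finrank_range (a : V' →ₗ[𝕜] V) (b : V →ₗ[𝕜] V'') h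
  omega

end Laplacian

section LowEigenspan

variable {𝕜 V W : Type*} [RCLike 𝕜] [AddCommGroup V] [Module 𝕜 V] [AddCommGroup W] [Module 𝕜 W]

def lowEigenspan (T : V →ₗ[𝕜] V) (μ : ℝ) : Submodule 𝕜 V :=
  span 𝕜 {v | ∃ c : ℝ, c ≤ μ ∧ T v = (c : 𝕜) • v}

theorem ker_le_lowEigenspan (T : V →ₗ[𝕜] V) {μ : ℝ} (hμ : 0 ≤ μ) :
    LinearMap.ker T ≤ lowEigenspan T μ :=
  fun v hv => subset_span ⟨0, hμ, by simpa using hv⟩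

theorem map_lowEigenspan_le (f : V →ₗ[𝕜] W) {S : V →ₗ[𝕜] V} {T : W →ₗ[𝕜] W}
    (h : f ∘ₗ S = T ∘ₗ f) (μ : ℝ) : (lowEigenspan S μ).map f ≤ lowEigenspan T μ := by
  rw [lowEigenspan, map_span]
  refine span_mono ?_
  rintro _ ⟨v, ⟨c, hc, hv⟩, rfl⟩
  exact ⟨c, hc, by rw [← LinearMap.comp_apply, ← h, LinearMap.comp_apply, hv, map_smul]⟩

end LowEigenspan

theorem sum_range_succ_neg_one_pow_sub (f : ℕ → ℤ) (q : ℕ) :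
    ∑ j ∈ Finset.range (q + 2), (-1) ^ (q + 1 - j) * f j =
      f (q + 1) - ∑ j ∈ Finset.range (q + 1), (-1) ^ (q - j) * f j := by
  rw [Finset.sum_range_succ, Nat.sub_self, pow_zero, one_mul, sub_eq_neg_add,
    ← Finset.sum_neg_distrib]
  congr 1
  refine Finset.sum_congr rfl fun j hj => ?_
  rw [Nat.sub_add_comm (Finset.mem_range_succ_iff.mp hj), pow_succ]
  ring

theorem sum_range_neg_one_pow_mul_eq_add (e h r : ℕ → ℤ) (h₀ : e 0 = h 0 + r 0)
    (hsucc : ∀ j, e (j + 1) = h (j + 1) + r j + r (j + 1)) (q : ℕ) :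
    ∑ j ∈ Finset.range (q + 1), (-1) ^ (q - j) * e j =
      ∑ j ∈ Finset.range (q + 1), (-1) ^ (q - j) * h j + r q := by
  induction q with
  | zero => simp [h₀]
  | succ q ih =>
    rw [sum_range_succ_neg_one_pow_sub, sum_range_succ_neg_one_pow_sub, ih, hsucc]
    ring

theorem sum_range_neg_one_pow_mul_le (e h r : ℕ → ℕ) (h₀ : e 0 = h 0 + r 0)
    (hsucc : ∀ j, e (j + 1) = h (j + 1) + r j + r (j + 1)) (q : ℕ) :
    ∑ j ∈ Finset.range (q + 1), (-1 : ℤ) ^ (q - j) * (h j : ℤ) ≤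
      ∑ j ∈ Finset.range (q + 1), (-1 : ℤ) ^ (q - j) * (e j : ℤ) := by
  rw [sum_range_neg_one_pow_mul_eq_add (e ·) (h ·) (r ·) (by simp [h₀])
    (fun j => by simp [hsucc])]
  exact le_add_of_nonneg_right (Int.natCast_nonneg _)

/-- Demailly/Witten linear-algebra lemma: for a finite cochain complex
    0 → C⁰ → ⋯ → Cⁿ → 0 of finite-dimensional complex inner product spaces,
    with Laplacians Δⱼ = d*ⱼ dⱼ + dⱼ₋₁ d*ⱼ₋₁ and Eⱼ(≤ μ) the span of eigenvectors
    of Δⱼ with eigenvalue ≤ μ, the alternating sums of cohomology dimensions are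
    bounded by the alternating sums of dim Eⱼ(≤ μ). -/
theorem stmt_8 (n : ℕ) (C : ℕ → Type*)
    [∀ j, NormedAddCommGroup (C j)] [∀ j, InnerProductSpace ℂ (C j)]
    [∀ j, FiniteDimensional ℂ (C j)]
    (d : ∀ j, C j →L[ℂ] C (j + 1))
    (hd : ∀ j, (d (j + 1)).comp (d j) = 0)
    (μ : ℝ) (hμ : 0 ≤ μ)
    (Δ : ∀ j, C j →L[ℂ] C j)
    (hΔ0 : Δ 0 = (ContinuousLinearMap.adjoint (d 0)).comp (d 0))
    (hΔsucc : ∀ j, Δ (j + 1) =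
      (ContinuousLinearMap.adjoint (d (j + 1)) : C (j + 1 + 1) →L[ℂ] C (j + 1)).comp (d (j + 1)) +
        (d j).comp (ContinuousLinearMap.adjoint (d j)))
    (hdim : ℕ → ℕ)
    (hdim0 : hdim 0 = Module.finrank ℂ (LinearMap.ker (d 0 : C 0 →ₗ[ℂ] C (0 + 1))))
    (hdimsucc : ∀ j, hdim (j + 1) =
      Module.finrank ℂ
        (LinearMap.ker (d (j + 1) : C (j + 1) →ₗ[ℂ] C (j + 1 + 1)) ⧸
          LinearMap.range (((d j : C j →ₗ[ℂ] C (j + 1))).codRestrict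
            (LinearMap.ker (d (j + 1) : C (j + 1) →ₗ[ℂ] C (j + 1 + 1)))
            (fun x => LinearMap.mem_ker.mpr
              (by simpa using ContinuousLinearMap.ext_iff.mp (hd j) x))))) :
    ∀ q ≤ n, ∑ j ∈ Finset.range (q + 1), (-1 : ℤ) ^ (q - j) * (hdim j : ℤ)
        ≤ ∑ j ∈ Finset.range (q + 1), (-1 : ℤ) ^ (q - j) *
            (Module.finrank ℂ
              (Submodule.span ℂ {v : C j | ∃ c : ℝ, c ≤ μ ∧ Δ j v = (c : ℂ) • v}) : ℤ) := by
  intro q _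
  let E j := lowEigenspan (Δ j : C j →ₗ[ℂ] C j) μ
  -- the zero map `C 0 → C 0` plays the role of the missing differential into degree 0
  have hΔ₀ : Δ 0 = laplacian (0 : C 0 →L[ℂ] C 0) (d 0) := by simp [laplacian, hΔ0]
  have hΔ : ∀ j, Δ (j + 1) = laplacian (d j) (d (j + 1)) := hΔsucc
  have hd_comm : ∀ j, d j ∘L Δ j = Δ (j + 1) ∘L d j
    | 0 => by rw [hΔ₀, hΔ]; exact comp_laplacian _ _ _ (comp_zero _) (hd 0)
    | j + 1 => by rw [hΔ, hΔ]; exact comp_laplacian _ _ _ (hd j) (hd (j + 1))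
  have hd_adjoint_comm : ∀ j, adjoint (d j) ∘L Δ (j + 1) = Δ j ∘L adjoint (d j)
    | 0 => by rw [hΔ₀, hΔ]; exact adjoint_comp_laplacian _ _ _ (comp_zero _) (hd 0)
    | j + 1 => by rw [hΔ, hΔ]; exact adjoint_comp_laplacian _ _ _ (hd j) (hd (j + 1))
  have hcoh : ∀ j, hdim j = finrank ℂ (Δ j).ker
    | 0 => by rw [hdim0, hΔ0, ker_adjoint_comp_self]
    | j + 1 => by rw [hdimsucc, finrank_cohomology_eq_finrank_ker_laplacian, hΔ]
  have hE₀ : finrank ℂ (E 0) = hdim 0 + finrank ℂ ((E 0).map (d 0 : C 0 →ₗ[ℂ] C 1)) := by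
    have hker : (laplacian (0 : C 0 →L[ℂ] C 0) (d 0)).ker ≤ E 0 := by
      rw [← hΔ₀]; exact ker_le_lowEigenspan _ hμ
    have := finrank_eq_finrank_ker_laplacian_add_add _ _ (comp_zero _) (W' := ⊤) hker
      (by simp) le_top
    rwa [← hΔ₀, ← hcoh, toLinearMap_zero, Submodule.map_zero, finrank_bot, add_zero] at this
  have hEsucc : ∀ j, finrank ℂ (E (j + 1)) = hdim (j + 1) +
      finrank ℂ ((E j).map (d j : C j →ₗ[ℂ] C (j + 1))) +
      finrank ℂ ((E (j + 1)).map (d (j + 1) : C (j + 1) →ₗ[ℂ] C (j + 1 + 1))) := by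
    intro j
    have hker : (laplacian (d j) (d (j + 1))).ker ≤ E (j + 1) := by
      rw [← hΔ j]; exact ker_le_lowEigenspan _ hμ
    have := finrank_eq_finrank_ker_laplacian_add_add _ _ (hd j) hker
      (map_lowEigenspan_le _ congr($(hd_comm j).toLinearMap) μ)
      (map_lowEigenspan_le _ congr($(hd_adjoint_comm j).toLinearMap) μ)
    rwa [← hΔ j, ← hcoh] at this
  exact sum_range_neg_one_pow_mul_le (fun j => finrank ℂ (E j)) hdim
    (fun j => finrank ℂ ((E j).map (d j : C j →ₗ[ℂ] C (j + 1)))) hE₀ hEsucc q
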